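/- Let L be a positive integer. Then the function α_L is (4π)-periodic, and for every ω ∈ ℝ, |e^{i α_L(ω)} − 𝓘(ω)| ≤ 2√2 · Δ(ω)^{2L+1}. -/

import Mathlib

open Complex
open scoped Classical

/-- The phase function `α_L`, with the convention `arctan(±∞) = ±π/2` at the
points `ω ∈ 2π + 4πℤ`. -/
noncomputable def alphaL (L : ℕ) (ω : ℝ) : ℝ :=
  if ∃ k : ℤ, ω = 2 * Real.pi + 4 * Real.pi * k then (-1 : ℝ) ^ L * Real.pi
  else 2 * (-1 : ℝ) ^ L * Real.arctan (Real.tan (ω / 4) ^ (2 * L + 1))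

/-- The `(4π)`-periodic rectangular function `𝓘`, equal to `1` on `[-π, π) + 4πℤ`
and `-1` elsewhere. -/
noncomputable def Ifun (ω : ℝ) : ℝ :=
  if ∃ k : ℤ, -Real.pi + 4 * Real.pi * k ≤ ω ∧ ω < Real.pi + 4 * Real.pi * k then 1 else -1

/-- The function `Δ(ω) = min(|tan(ω/4)|, |tan(ω/4)|⁻¹)` (with Lean's conventions
`tan` vanishes where `cos` does, so `Δ = 0` on `2π + 4πℤ` as required). -/
noncomputable def Dfun (ω : ℝ) : ℝ :=
  min |Real.tan (ω / 4)| |Real.tan (ω / 4)|⁻¹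

/-!
On the period `[-π, 3π)` write `t = tan (ω / 4)`. Away from `ω = 2π` we have `α_L = 2 arctan v`
with `|v| = |t| ^ (2L+1)`, and the half-angle formulas give
`‖e^{2i arctan v} - 1‖ = 2|v| / √(1 + v²) ≤ 2|v|` and `‖e^{2i arctan v} + 1‖ = 2 / √(1 + v²) ≤ 2 / |v|`.
Since `tan² x ≤ 1` exactly when `cos 2x ≥ 0`, we get `|t| ≤ 1` where `𝓘 = 1` and `|t| ≥ 1` where
`𝓘 = -1`, so in both cases the error is at most `2 Δ ^ (2L+1)`; at `ω = 2π`, `e^{iα_L} = -1 = 𝓘`.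
All three functions are `4π`-periodic, which carries the bound to all of `ℝ`.
-/

open scoped Real
open Set

theorem Complex.norm_exp_I_mul_ofReal_add_one (x : ℝ) :
    ‖exp (I * x) + 1‖ = ‖2 * Real.cos (x / 2)‖ := by
  have h : exp (I * x) + 1 = -(exp (I * ↑(x + π)) - 1) := by
    rw [ofReal_add, mul_add, exp_add, mul_comm I ↑π, exp_pi_mul_I]
    ring
  rw [h, norm_neg, norm_exp_I_mul_ofReal_sub_one, add_div, Real.sin_add_pi_div_two]

theorem norm_exp_I_mul_two_mul_arctan_sub_one_le (v : ℝ) :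
    ‖exp (I * ↑(2 * Real.arctan v)) - 1‖ ≤ 2 * |v| := by
  rw [norm_exp_I_mul_ofReal_sub_one, mul_div_cancel_left₀ _ two_ne_zero, Real.sin_arctan,
    Real.norm_eq_abs, abs_mul, abs_two, abs_div, abs_of_pos (by positivity : 0 < √(1 + v ^ 2))]
  gcongr
  exact div_le_self (abs_nonneg v) (Real.one_le_sqrt.mpr (by nlinarith))

theorem norm_exp_I_mul_two_mul_arctan_add_one_le {v : ℝ} (hv : v ≠ 0) :
    ‖exp (I * ↑(2 * Real.arctan v)) + 1‖ ≤ 2 * |v|⁻¹ := by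
  rw [norm_exp_I_mul_ofReal_add_one, mul_div_cancel_left₀ _ two_ne_zero, Real.cos_arctan,
    Real.norm_eq_abs, abs_mul, abs_two, abs_div, abs_one,
    abs_of_pos (by positivity : 0 < √(1 + v ^ 2)), one_div]
  gcongr
  rw [← Real.sqrt_sq_eq_abs]
  exact Real.sqrt_le_sqrt (by linarith)

theorem abs_tan_le_one_of_cos_two_mul_nonneg {x : ℝ} (h : 0 ≤ Real.cos (2 * x)) :
    |Real.tan x| ≤ 1 := by
  rw [Real.tan_eq_sin_div_cos, abs_div]
  rcases eq_or_ne (Real.cos x) 0 with hc | hc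
  · simp [hc] -- `tan x = 0` where `cos x = 0`
  rw [div_le_one (abs_pos.mpr hc), ← sq_le_sq]
  linarith [Real.cos_two_mul' x]

theorem one_le_abs_tan_of_cos_two_mul_nonpos {x : ℝ} (hc : Real.cos x ≠ 0)
    (h : Real.cos (2 * x) ≤ 0) : 1 ≤ |Real.tan x| := by
  rw [Real.tan_eq_sin_div_cos, abs_div, one_le_div (abs_pos.mpr hc), ← sq_le_sq]
  linarith [Real.cos_two_mul' x]

theorem min_inv_eq_self_of_le_one {x : ℝ} (h₀ : 0 ≤ x) (h₁ : x ≤ 1) : min x x⁻¹ = x := by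
  rcases h₀.eq_or_lt with rfl | hpos
  · simp
  exact min_eq_left (h₁.trans (one_le_inv₀ hpos |>.mpr h₁))

theorem min_inv_eq_inv_of_one_le {x : ℝ} (h : 1 ≤ x) : min x x⁻¹ = x⁻¹ :=
  min_eq_right ((inv_le_one_of_one_le₀ h).trans h)

theorem alphaL_periodic (L : ℕ) : Function.Periodic (alphaL L) (4 * π) := by
  intro ω
  have hshift : (∃ k : ℤ, ω + 4 * π = 2 * π + 4 * π * k) ↔ ∃ k : ℤ, ω = 2 * π + 4 * π * k :=
    ⟨fun ⟨k, hk⟩ => ⟨k - 1, by push_cast; linarith⟩,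
      fun ⟨k, hk⟩ => ⟨k + 1, by push_cast; linarith⟩⟩
  simp only [alphaL, hshift, add_div, show 4 * π / 4 = π by ring, Real.tan_add_pi]

theorem Ifun_periodic : Function.Periodic Ifun (4 * π) := by
  intro ω
  have hshift : (∃ k : ℤ, -π + 4 * π * k ≤ ω + 4 * π ∧ ω + 4 * π < π + 4 * π * k) ↔
      ∃ k : ℤ, -π + 4 * π * k ≤ ω ∧ ω < π + 4 * π * k :=
    ⟨fun ⟨k, hk₁, hk₂⟩ => ⟨k - 1, by push_cast; linarith, by push_cast; linarith⟩,
      fun ⟨k, hk₁, hk₂⟩ => ⟨k + 1, by push_cast; linarith, by push_cast; linarith⟩⟩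
  simp only [Ifun, hshift]

theorem Dfun_nonneg (ω : ℝ) : 0 ≤ Dfun ω :=
  le_min (abs_nonneg _) (inv_nonneg.mpr (abs_nonneg _))

theorem Dfun_periodic : Function.Periodic Dfun (4 * π) := by
  intro ω
  simp only [Dfun, add_div, show 4 * π / 4 = π by ring, Real.tan_add_pi]

theorem Ifun_eq_one_of_mem_Ico {ω : ℝ} (hω : ω ∈ Ico (-π) π) : Ifun ω = 1 :=
  if_pos ⟨0, by simpa using hω⟩

theorem Ifun_eq_neg_one_of_mem_Ico {ω : ℝ} (hω : ω ∈ Ico π (3 * π)) : Ifun ω = -1 := by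
  refine if_neg fun ⟨k, hk₁, hk₂⟩ => ?_
  have hpos : (0 : ℝ) < k := by nlinarith [hω.1, Real.pi_pos]
  have hlt : (k : ℝ) < 1 := by nlinarith [hω.2, Real.pi_pos]
  have : (0 : ℤ) < k := by exact_mod_cast hpos
  have : k < 1 := by exact_mod_cast hlt
  omega

theorem exists_eq_two_pi_add_iff_of_mem_Ico {ω : ℝ} (hω : ω ∈ Ico (-π) (3 * π)) :
    (∃ k : ℤ, ω = 2 * π + 4 * π * k) ↔ ω = 2 * π := by
  refine ⟨fun ⟨k, hk⟩ => ?_, fun h => ⟨0, by simp [h]⟩⟩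
  have hgt : (-1 : ℝ) < k := by nlinarith [hω.1, Real.pi_pos]
  have hlt : (k : ℝ) < 1 := by nlinarith [hω.2, Real.pi_pos]
  have : (-1 : ℤ) < k := by exact_mod_cast hgt
  have : k < 1 := by exact_mod_cast hlt
  obtain rfl : k = 0 := by omega
  simpa using hk

theorem alphaL_eq_two_mul_arctan (L : ℕ) {ω : ℝ} (hω : ¬∃ k : ℤ, ω = 2 * π + 4 * π * k) :
    alphaL L ω = 2 * Real.arctan ((-1) ^ L * Real.tan (ω / 4) ^ (2 * L + 1)) := by
  rw [alphaL, if_neg hω, mul_assoc]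
  rcases neg_one_pow_eq_or ℝ L with h | h <;> simp [h, Real.arctan_neg]

theorem exp_I_mul_alphaL_two_pi (L : ℕ) : exp (I * alphaL L (2 * π)) = -1 := by
  rw [← sub_eq_zero, sub_neg_eq_add, ← norm_eq_zero, norm_exp_I_mul_ofReal_add_one,
    alphaL, if_pos ⟨0, by simp⟩]
  rcases neg_one_pow_eq_or ℝ L with h | h <;> simp [h, neg_div]

theorem abs_tan_div_four_le_one {ω : ℝ} (hω : ω ∈ Icc (-π) π) : |Real.tan (ω / 4)| ≤ 1 := by
  refine abs_tan_le_one_of_cos_two_mul_nonneg (Real.cos_nonneg_of_mem_Icc ?_)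
  constructor <;> linarith [hω.1, hω.2]

theorem one_le_abs_tan_div_four {ω : ℝ} (hω : ω ∈ Icc π (3 * π)) (hne : ω ≠ 2 * π) :
    1 ≤ |Real.tan (ω / 4)| := by
  have hcos : Real.cos (ω / 4) ≠ 0 := by
    rw [← Real.cos_pi_div_two]
    refine fun h => hne ?_
    have := Real.injOn_cos ⟨?_, ?_⟩ ⟨by positivity, by linarith [Real.pi_pos]⟩ h
    · linarith
    all_goals linarith [hω.1, hω.2, Real.pi_pos]
  refine one_le_abs_tan_of_cos_two_mul_nonpos hcos
    (Real.cos_nonpos_of_pi_div_two_le_of_le ?_ ?_) <;> linarith [hω.1, hω.2]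

theorem norm_exp_I_mul_alphaL_sub_Ifun_le_of_mem_Ico (L : ℕ) {ω : ℝ}
    (hω : ω ∈ Ico (-π) (3 * π)) :
    ‖exp (I * (alphaL L ω : ℂ)) - (Ifun ω : ℂ)‖ ≤ 2 * Dfun ω ^ (2 * L + 1) := by
  set t := Real.tan (ω / 4)
  have habs : |(-1) ^ L * t ^ (2 * L + 1)| = |t| ^ (2 * L + 1) := by
    simp [abs_mul, abs_pow]
  rcases lt_or_ge ω π with hlt | hge
  · have hnot : ¬∃ k : ℤ, ω = 2 * π + 4 * π * k := by
      rw [exists_eq_two_pi_add_iff_of_mem_Ico hω]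
      linarith [Real.pi_pos]
    have ht : |t| ≤ 1 := abs_tan_div_four_le_one ⟨hω.1, hlt.le⟩
    rw [Ifun_eq_one_of_mem_Ico ⟨hω.1, hlt⟩, alphaL_eq_two_mul_arctan L hnot, Dfun,
      min_inv_eq_self_of_le_one (abs_nonneg t) ht, ← habs, ofReal_one]
    exact norm_exp_I_mul_two_mul_arctan_sub_one_le _
  rw [Ifun_eq_neg_one_of_mem_Ico ⟨hge, hω.2⟩, ofReal_neg, ofReal_one, sub_neg_eq_add]
  rcases eq_or_ne ω (2 * π) with rfl | hne
  · rw [exp_I_mul_alphaL_two_pi, neg_add_cancel, norm_zero]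
    exact mul_nonneg zero_le_two (pow_nonneg (Dfun_nonneg _) _)
  have hnot : ¬∃ k : ℤ, ω = 2 * π + 4 * π * k := by
    rwa [exists_eq_two_pi_add_iff_of_mem_Ico hω]
  have ht : 1 ≤ |t| := one_le_abs_tan_div_four ⟨hge, hω.2.le⟩ hne
  rw [alphaL_eq_two_mul_arctan L hnot, Dfun, min_inv_eq_inv_of_one_le ht, inv_pow, ← habs]
  refine norm_exp_I_mul_two_mul_arctan_add_one_le ?_
  rw [← abs_pos, habs]
  positivity

theorem alphaL_periodic_and_close_to_rect (L : ℕ) :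
    (∀ ω : ℝ, alphaL L (ω + 4 * Real.pi) = alphaL L ω) ∧
    ∀ ω : ℝ,
      ‖Complex.exp (Complex.I * (alphaL L ω : ℂ)) - (Ifun ω : ℂ)‖ ≤
        2 * Real.sqrt 2 * Dfun ω ^ (2 * L + 1) := by
  refine ⟨alphaL_periodic L, fun ω => ?_⟩
  have hperiodic : Function.Periodic (fun ω => ‖exp (I * (alphaL L ω : ℂ)) - (Ifun ω : ℂ)‖ ≤
      2 * Dfun ω ^ (2 * L + 1)) (4 * π) := fun ω => by
    simp only [alphaL_periodic L ω, Ifun_periodic ω, Dfun_periodic ω]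
  obtain ⟨y, hy, hωy⟩ := hperiodic.exists_mem_Ico (by positivity) ω (-π)
  have hbound : ‖exp (I * (alphaL L ω : ℂ)) - (Ifun ω : ℂ)‖ ≤ 2 * Dfun ω ^ (2 * L + 1) := by
    rw [show -π + 4 * π = 3 * π by ring] at hy
    rw [hωy]
    exact norm_exp_I_mul_alphaL_sub_Ifun_le_of_mem_Ico L hy
  calc _ ≤ 2 * Dfun ω ^ (2 * L + 1) := hbound
    _ ≤ 2 * Real.sqrt 2 * Dfun ω ^ (2 * L + 1) := by
      have := Dfun_nonneg ω
      gcongr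
      exact le_mul_of_one_le_right zero_le_two (Real.one_le_sqrt.mpr one_le_two)
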